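/- arXiv:2205.13903 — 3 statements merged into one kernel-verified Lean document; each statement's English description precedes it below -/
import Mathlib

section
/- Let (A, ≺) be a proto-subordination algebra satisfying (WO) and (DD). Then Diamond is monotone (a ≤ b implies Diamond a ≤ Diamond b) if and only if ≺ satisfies (SI): a ≤ b ≺ x implies a ≺ x. -/
section Diamond

variable {A D : Type*} [PartialOrder A] [CompleteLattice D] (e : A → D) (r : A → A → Prop)

/-- `diamond e r a` is `◇a = ⋀ ≺[a]`, computed in `D` through the embedding `e : A → D`. -/
def diamond (a : A) : D :=
  sInf (e '' {x | r a x})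

variable {e r}

theorem exists_le_of_sInf_image_le
    (compact : ∀ F I : Set A, DirectedOn (· ≥ ·) F → DirectedOn (· ≤ ·) I →
      sInf (e '' F) ≤ sSup (e '' I) → ∃ a ∈ F, ∃ b ∈ I, a ≤ b)
    {F : Set A} (hF : DirectedOn (· ≥ ·) F) {x : A} (h : sInf (e '' F) ≤ e x) :
    ∃ a ∈ F, a ≤ x := by
  obtain ⟨a, ha, b, rfl, hab⟩ :=
    compact F {x} hF (directedOn_singleton x) (by rwa [Set.image_singleton, sSup_singleton])
  exact ⟨a, ha, hab⟩

theorem diamond_le_iff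
    (compact : ∀ F I : Set A, DirectedOn (· ≥ ·) F → DirectedOn (· ≤ ·) I →
      sInf (e '' F) ≤ sSup (e '' I) → ∃ a ∈ F, ∃ b ∈ I, a ≤ b)
    (WO : ∀ b x y : A, r b x → x ≤ y → r b y)
    (DD : ∀ a x₁ x₂ : A, r a x₁ → r a x₂ → ∃ x, r a x ∧ x ≤ x₁ ∧ x ≤ x₂) {a x : A} :
    diamond e r a ≤ e x ↔ r a x := by
  refine ⟨fun h => ?_, fun hx => sInf_le ⟨x, hx, rfl⟩⟩
  have hdir : DirectedOn (· ≥ ·) {x | r a x} := fun x₁ h₁ x₂ h₂ => DD a x₁ x₂ h₁ h₂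
  obtain ⟨c, hc, hcx⟩ := exists_le_of_sInf_image_le compact hdir h
  exact WO a c x hc hcx

end Diamond

theorem stmt_6_general {A D : Type*} [PartialOrder A] [CompleteLattice D]
    (e : A → D)
    (compact : ∀ F I : Set A, DirectedOn (· ≥ ·) F → DirectedOn (· ≤ ·) I →
      sInf (e '' F) ≤ sSup (e '' I) → ∃ a ∈ F, ∃ b ∈ I, a ≤ b)
    (r : A → A → Prop)
    (WO : ∀ b x y : A, r b x → x ≤ y → r b y)
    (DD : ∀ a x₁ x₂ : A, r a x₁ → r a x₂ → ∃ x, r a x ∧ x ≤ x₁ ∧ x ≤ x₂) :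
    (∀ a b : A, a ≤ b → sInf (e '' {x | r a x}) ≤ sInf (e '' {x | r b x})) ↔
      (∀ a b x : A, a ≤ b → r b x → r a x) := by
  constructor
  · intro mono a b x hab hbx
    exact (diamond_le_iff compact WO DD).1
      ((mono a b hab).trans ((diamond_le_iff compact WO DD).2 hbx))
  · intro SI a b hab
    exact sInf_le_sInf (Set.image_mono fun x hbx => SI a b x hab hbx)

/-- Under (WO) and (DD), `Diamond` is monotone iff (SI) holds. -/
theorem stmt_6 {A D : Type*} [PartialOrder A] [CompleteLattice D]
    (e : A → D) (he : ∀ a b : A, e a ≤ e b ↔ a ≤ b)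
    (compact : ∀ F I : Set A, DirectedOn (· ≥ ·) F → DirectedOn (· ≤ ·) I →
      sInf (e '' F) ≤ sSup (e '' I) → ∃ a ∈ F, ∃ b ∈ I, a ≤ b)
    (r : A → A → Prop)
    (WO : ∀ b x y : A, r b x → x ≤ y → r b y)
    (DD : ∀ a x₁ x₂ : A, r a x₁ → r a x₂ → ∃ x, r a x ∧ x ≤ x₁ ∧ x ≤ x₂) :
    (∀ a b : A, a ≤ b → sInf (e '' {x | r a x}) ≤ sInf (e '' {x | r b x})) ↔
      (∀ a b x : A, a ≤ b → r b x → r a x) :=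
  stmt_6_general e compact r WO DD
end

section
/- Let (A, ≺) be a proto-subordination algebra satisfying (SI), (WO), and (DD), and let k ∈ K(A^δ) with k = ⋀D for a down-directed D ⊆ A, where Diamond k := ⋀{Diamond a | a ∈ A, k ≤ a}. Then Diamond k = ⋀ ≺[D] where ≺[D] = {c | ∃a ∈ D, a ≺ c}; in particular Diamond k is a closed element of A^δ. Moreover, if b ∈ A and Diamond k ≤ b, then there exists a ∈ A with k ≤ a and a ≺ b. -/
/-! Every element `a ∈ A` with `⋀ S ≤ a` lies above some `s ∈ S` by compactness, so
`◇ a ≥ ⋀ ≺[s]` by (SI); this gives `◇ (⋀ S) = ⋀ ≺[S]`. The set `≺[S]` is down-directed by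
(SI) and (DD), so compactness applied to `⋀ ≺[S] ≤ b` yields `a ∈ S` and `a ≺ c ≤ b`, and (WO)
finishes. -/

section

variable {A D : Type*} [PartialOrder A] [CompleteLattice D]

theorem directedOn_ge_setOf_exists_rel {r : A → A → Prop}
    (SI : ∀ a b x : A, a ≤ b → r b x → r a x)
    (DD : ∀ a x₁ x₂ : A, r a x₁ → r a x₂ → ∃ x, r a x ∧ x ≤ x₁ ∧ x ≤ x₂)
    {S : Set A} (hS : DirectedOn (· ≥ ·) S) :
    DirectedOn (· ≥ ·) {c : A | ∃ a ∈ S, r a c} := by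
  rintro c₁ ⟨a₁, ha₁, hc₁⟩ c₂ ⟨a₂, ha₂, hc₂⟩
  obtain ⟨a, ha, ha₁', ha₂'⟩ := hS a₁ ha₁ a₂ ha₂
  obtain ⟨c, hc, hcc₁, hcc₂⟩ := DD a c₁ c₂ (SI a a₁ c₁ ha₁' hc₁) (SI a a₂ c₂ ha₂' hc₂)
  exact ⟨c, ⟨a, ha, hc⟩, hcc₁, hcc₂⟩

theorem exists_mem_le_of_sInf_image_le {e : A → D}
    (compact : ∀ F I : Set A, DirectedOn (· ≥ ·) F → DirectedOn (· ≤ ·) I →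
      sInf (e '' F) ≤ sSup (e '' I) → ∃ a ∈ F, ∃ b ∈ I, a ≤ b)
    {F : Set A} (hF : DirectedOn (· ≥ ·) F) {b : A} (h : sInf (e '' F) ≤ e b) :
    ∃ a ∈ F, a ≤ b := by
  rw [← sSup_singleton (a := e b), ← Set.image_singleton] at h
  obtain ⟨a, ha, b', rfl, hab⟩ := compact F {b} hF (directedOn_singleton b) h
  exact ⟨a, ha, hab⟩

theorem sInf_diamond_eq_sInf_image_setOf_exists_rel {e : A → D}
    (compact : ∀ F I : Set A, DirectedOn (· ≥ ·) F → DirectedOn (· ≤ ·) I →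
      sInf (e '' F) ≤ sSup (e '' I) → ∃ a ∈ F, ∃ b ∈ I, a ≤ b)
    {r : A → A → Prop} (SI : ∀ a b x : A, a ≤ b → r b x → r a x)
    {S : Set A} (hS : DirectedOn (· ≥ ·) S) :
    sInf {u : D | ∃ a : A, sInf (e '' S) ≤ e a ∧ u = sInf (e '' {x | r a x})}
      = sInf (e '' {c : A | ∃ a ∈ S, r a c}) := by
  apply le_antisymm
  · refine le_sInf ?_
    rintro _ ⟨c, ⟨a, ha, hac⟩, rfl⟩
    calc sInf {u : D | ∃ a : A, sInf (e '' S) ≤ e a ∧ u = sInf (e '' {x | r a x})}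
        ≤ sInf (e '' {x | r a x}) := sInf_le ⟨a, sInf_le ⟨a, ha, rfl⟩, rfl⟩
      _ ≤ e c := sInf_le ⟨c, hac, rfl⟩
  · refine le_sInf ?_
    rintro _ ⟨a, hSa, rfl⟩
    obtain ⟨s, hs, hsa⟩ := exists_mem_le_of_sInf_image_le compact hS hSa
    exact le_sInf fun _ ⟨x, hax, hx⟩ => hx ▸ sInf_le ⟨x, ⟨s, hs, SI s a x hsa hax⟩, rfl⟩

end

theorem stmt_13_general {A D : Type*} [PartialOrder A] [CompleteLattice D]
    (e : A → D)
    (compact : ∀ F I : Set A, DirectedOn (· ≥ ·) F → DirectedOn (· ≤ ·) I →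
      sInf (e '' F) ≤ sSup (e '' I) → ∃ a ∈ F, ∃ b ∈ I, a ≤ b)
    (r : A → A → Prop)
    (SI : ∀ a b x : A, a ≤ b → r b x → r a x)
    (WO : ∀ b x y : A, r b x → x ≤ y → r b y)
    (DD : ∀ a x₁ x₂ : A, r a x₁ → r a x₂ → ∃ x, r a x ∧ x ≤ x₁ ∧ x ≤ x₂)
    (S : Set A) (hS : DirectedOn (· ≥ ·) S) :
    (sInf {u : D | ∃ a : A, sInf (e '' S) ≤ e a ∧ u = sInf (e '' {x | r a x})}
        = sInf (e '' {c : A | ∃ a ∈ S, r a c})) ∧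
    (∃ F : Set A, DirectedOn (· ≥ ·) F ∧
      sInf {u : D | ∃ a : A, sInf (e '' S) ≤ e a ∧ u = sInf (e '' {x | r a x})}
        = sInf (e '' F)) ∧
    (∀ b : A,
      sInf {u : D | ∃ a : A, sInf (e '' S) ≤ e a ∧ u = sInf (e '' {x | r a x})} ≤ e b →
      ∃ a : A, sInf (e '' S) ≤ e a ∧ r a b) := by
  have hdiamond := sInf_diamond_eq_sInf_image_setOf_exists_rel compact SI hS
  have hdir := directedOn_ge_setOf_exists_rel SI DD hS
  refine ⟨hdiamond, ⟨_, hdir, hdiamond⟩, fun b hb => ?_⟩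
  obtain ⟨c, ⟨a, ha, hac⟩, hcb⟩ :=
    exists_mem_le_of_sInf_image_le compact hdir (hdiamond ▸ hb)
  exact ⟨a, sInf_le ⟨a, ha, rfl⟩, WO a c b hac hcb⟩

/-- Under (SI), (WO), (DD): for `k = ⨅ S` with `S ⊆ A` down-directed,
`Diamond k = ⨅ ≺[S]`, `Diamond k` is closed, and `Diamond k ≤ e b` implies
`a ≺ b` for some `a` with `k ≤ e a`. -/
theorem stmt_13 {A D : Type*} [PartialOrder A] [CompleteLattice D]
    (e : A → D) (he : ∀ a b : A, e a ≤ e b ↔ a ≤ b)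
    (compact : ∀ F I : Set A, DirectedOn (· ≥ ·) F → DirectedOn (· ≤ ·) I →
      sInf (e '' F) ≤ sSup (e '' I) → ∃ a ∈ F, ∃ b ∈ I, a ≤ b)
    (r : A → A → Prop)
    (SI : ∀ a b x : A, a ≤ b → r b x → r a x)
    (WO : ∀ b x y : A, r b x → x ≤ y → r b y)
    (DD : ∀ a x₁ x₂ : A, r a x₁ → r a x₂ → ∃ x, r a x ∧ x ≤ x₁ ∧ x ≤ x₂)
    (S : Set A) (hS : DirectedOn (· ≥ ·) S) :
    (sInf {u : D | ∃ a : A, sInf (e '' S) ≤ e a ∧ u = sInf (e '' {x | r a x})}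
        = sInf (e '' {c : A | ∃ a ∈ S, r a c})) ∧
    (∃ F : Set A, DirectedOn (· ≥ ·) F ∧
      sInf {u : D | ∃ a : A, sInf (e '' S) ≤ e a ∧ u = sInf (e '' {x | r a x})}
        = sInf (e '' F)) ∧
    (∀ b : A,
      sInf {u : D | ∃ a : A, sInf (e '' S) ≤ e a ∧ u = sInf (e '' {x | r a x})} ≤ e b →
      ∃ a : A, sInf (e '' S) ≤ e a ∧ r a b) :=
  stmt_13_general e compact r SI WO DD S hS
end

section
/- Let (A, ≺) be a proto-subordination algebra satisfying (SI), (WO), (DD), and (UD), based on a poset A equipped with an antitone involutive negation ¬ that is self-adjoint (¬a ≤ b ⟺ ¬b ≤ a). Then ≺ satisfies (S6): a ≺ b implies ¬b ≺ ¬a, if and only if ¬b ≺ ¬a holds for all a, b ∈ A with a ≺ b, which is in turn equivalent to: Box b = ¬ Diamond ¬b for all b ∈ A, where Diamond a := ⋀{x | a ≺ x} and Box b := ⋁{x | x ≺ b} in A^δ and ¬ is extended to A^δ as an antitone involution. -/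
/-! The direction (S6) ⟹ (Box = ¬Diamond¬) holds because (S6) makes `¬` a bijection between
`{x | x ≺ b}` and `{x | ¬b ≺ x}`, and the extended negation turns the meet defining `Diamond ¬b`
into the join defining `Box b`. Conversely, if `a ≺ b` then `e a ≤ Box b = ⋁ {¬x | ¬b ≺ x}`; the
set `{x | ¬b ≺ x}` is down-directed by (DD), so its negation is up-directed, and compactness of
the canonical extension gives a single `x` with `¬b ≺ x` and `a ≤ ¬x`, whence `¬b ≺ ¬a` by (WO). -/

section Negation

variable {A : Type*} [Preorder A] {neg : A → A}

lemma le_neg_comm_of_antitone_of_involutive (hanti : ∀ a b : A, a ≤ b → neg b ≤ neg a)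
    (hinv : ∀ a : A, neg (neg a) = a) {a x : A} (h : a ≤ neg x) : x ≤ neg a :=
  hinv x ▸ hanti _ _ h

lemma directedOn_le_image_of_directedOn_ge (hanti : ∀ a b : A, a ≤ b → neg b ≤ neg a)
    {s : Set A} (hs : DirectedOn (· ≥ ·) s) : DirectedOn (· ≤ ·) (neg '' s) :=
  hs.mono_comp fun x y hxy => hanti y x hxy

end Negation

lemma setOf_rel_eq_image_neg {A : Type*} {neg : A → A} {r : A → A → Prop}
    (hinv : ∀ a : A, neg (neg a) = a)
    (h6 : ∀ a b : A, r a b → r (neg b) (neg a)) (b : A) :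
    {x | r x b} = neg '' {x | r (neg b) x} := by
  ext x
  refine ⟨fun hx => ⟨neg x, h6 x b hx, hinv x⟩, ?_⟩
  rintro ⟨y, hy, rfl⟩
  show r (neg y) b
  simpa only [hinv] using h6 (neg b) y hy

lemma directedOn_ge_setOf_rel {A : Type*} [Preorder A] {r : A → A → Prop}
    (DD : ∀ a x₁ x₂ : A, r a x₁ → r a x₂ → ∃ x, r a x ∧ x ≤ x₁ ∧ x ≤ x₂) (a : A) :
    DirectedOn (· ≥ ·) {x | r a x} := fun _ h₁ _ h₂ => DD a _ _ h₁ h₂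

lemma exists_le_of_le_sSup_image {A D : Type*} [Preorder A] [CompleteLattice D] {e : A → D}
    (compact : ∀ F I : Set A, DirectedOn (· ≥ ·) F → DirectedOn (· ≤ ·) I →
      sInf (e '' F) ≤ sSup (e '' I) → ∃ a ∈ F, ∃ b ∈ I, a ≤ b)
    {I : Set A} (hI : DirectedOn (· ≤ ·) I) {a : A} (ha : e a ≤ sSup (e '' I)) :
    ∃ b ∈ I, a ≤ b := by
  have hF : DirectedOn (· ≥ ·) ({a} : Set A) :=
    @directedOn_singleton _ (· ≥ ·) ⟨le_refl⟩ a
  obtain ⟨_, rfl, b, hb, hab⟩ :=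
    compact {a} I hF hI (by rwa [Set.image_singleton, sInf_singleton])
  exact ⟨b, hb, hab⟩

lemma neg_sInf_image_eq_sSup_image_neg {A D : Type*} [CompleteLattice D] {e : A → D}
    {neg : A → A} {negD : D → D} (hnegE : ∀ a : A, negD (e a) = e (neg a))
    (hnegInf : ∀ S : Set D, negD (sInf S) = sSup (negD '' S)) (S : Set A) :
    negD (sInf (e '' S)) = sSup (e '' (neg '' S)) := by
  rw [hnegInf, Set.image_image, Set.image_image]
  simp only [hnegE]

theorem stmt_16_general {A D : Type*} [PartialOrder A] [CompleteLattice D]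
    (e : A → D)
    (compact : ∀ F I : Set A, DirectedOn (· ≥ ·) F → DirectedOn (· ≤ ·) I →
      sInf (e '' F) ≤ sSup (e '' I) → ∃ a ∈ F, ∃ b ∈ I, a ≤ b)
    (r : A → A → Prop)
    (WO : ∀ b x y : A, r b x → x ≤ y → r b y)
    (DD : ∀ a x₁ x₂ : A, r a x₁ → r a x₂ → ∃ x, r a x ∧ x ≤ x₁ ∧ x ≤ x₂)
    (neg : A → A)
    (hanti : ∀ a b : A, a ≤ b → neg b ≤ neg a)
    (hinv : ∀ a : A, neg (neg a) = a)
    (negD : D → D)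
    (hnegE : ∀ a : A, negD (e a) = e (neg a))
    (hnegInf : ∀ S : Set D, negD (sInf S) = sSup (negD '' S)) :
    ((∀ a b : A, r a b → r (neg b) (neg a)) ↔ (∀ a b : A, r a b → r (neg b) (neg a))) ∧
    ((∀ a b : A, r a b → r (neg b) (neg a)) ↔
      (∀ b : A, sSup (e '' {x | r x b}) = negD (sInf (e '' {x | r (neg b) x})))) := by
  refine ⟨Iff.rfl, fun h6 b => ?_, fun hbox a b hab => ?_⟩
  · rw [neg_sInf_image_eq_sSup_image_neg hnegE hnegInf, setOf_rel_eq_image_neg hinv h6]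
  · have hab' : e a ≤ sSup (e '' (neg '' {x | r (neg b) x})) := by
      rw [← neg_sInf_image_eq_sSup_image_neg hnegE hnegInf, ← hbox]
      exact le_sSup ⟨a, hab, rfl⟩
    obtain ⟨_, ⟨x, hx, rfl⟩, hax⟩ := exists_le_of_le_sSup_image compact
      (directedOn_le_image_of_directedOn_ge hanti (directedOn_ge_setOf_rel DD _)) hab'
    exact WO _ _ _ hx (le_neg_comm_of_antitone_of_involutive hanti hinv hax)

/-- For a directed proto-subordination algebra (satisfying (SI), (WO), (DD), (UD)) based
on a poset with an antitone, involutive, self-adjoint negation, condition (S6)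
(`a ≺ b → ¬b ≺ ¬a`) is (trivially) equivalent to `¬b ≺ ¬a` for all `a ≺ b`, which is
in turn equivalent to `Box b = ¬ Diamond ¬b` for all `b`, where the negation is extended
to the canonical extension as an antitone involution. -/
theorem stmt_16 {A D : Type*} [PartialOrder A] [CompleteLattice D]
    (e : A → D) (he : ∀ a b : A, e a ≤ e b ↔ a ≤ b)
    (compact : ∀ F I : Set A, DirectedOn (· ≥ ·) F → DirectedOn (· ≤ ·) I →
      sInf (e '' F) ≤ sSup (e '' I) → ∃ a ∈ F, ∃ b ∈ I, a ≤ b)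
    (r : A → A → Prop)
    (SI : ∀ a b x : A, a ≤ b → r b x → r a x)
    (WO : ∀ b x y : A, r b x → x ≤ y → r b y)
    (DD : ∀ a x₁ x₂ : A, r a x₁ → r a x₂ → ∃ x, r a x ∧ x ≤ x₁ ∧ x ≤ x₂)
    (UD : ∀ a₁ a₂ x : A, r a₁ x → r a₂ x → ∃ a, r a x ∧ a₁ ≤ a ∧ a₂ ≤ a)
    (neg : A → A)
    (hanti : ∀ a b : A, a ≤ b → neg b ≤ neg a)
    (hinv : ∀ a : A, neg (neg a) = a)
    (hadj : ∀ a b : A, neg a ≤ b ↔ neg b ≤ a)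
    (negD : D → D)
    (hnegE : ∀ a : A, negD (e a) = e (neg a))
    (hnegInf : ∀ S : Set D, negD (sInf S) = sSup (negD '' S))
    (hnegSup : ∀ S : Set D, negD (sSup S) = sInf (negD '' S))
    (hnegInv : ∀ u : D, negD (negD u) = u) :
    ((∀ a b : A, r a b → r (neg b) (neg a)) ↔ (∀ a b : A, r a b → r (neg b) (neg a))) ∧
    ((∀ a b : A, r a b → r (neg b) (neg a)) ↔
      (∀ b : A, sSup (e '' {x | r x b}) = negD (sInf (e '' {x | r (neg b) x})))) :=
  stmt_16_general e compact r WO DD neg hanti hinv negD hnegE hnegInf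
end
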